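/- Every convex polygon in ℝ² with exactly four edges satisfying the Delzant condition is the image under an element of AGL(2,ℤ) of a standard Hirzebruch trapezoid with parameters (a, b, m) for some non-negative integer m and positive reals a, b with a > mb/2. -/

import Mathlib

/-!
Since consecutive normals have determinant `1`, each normal is determined by its two neighbours
up to an integer: `u 2 = K • u 1 - u 0` and `u 3 = S • u 0 - u 1`. The condition at the
remaining corner then forces `K * S = 0`, i.e. two opposite edges are parallel;
after a cyclic relabelling these are the edges with normals `u 0` and `u 2 = -u 0`. In the
integral chart at the corner between the edges with normals `u 1` and `u 2` the polygon becomes a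
trapezoid with vertices `(0, 0)`, `(0, b)`, `(t, b)`, `(s, 0)` and `s - t = S * b`, which is a
Hirzebruch trapezoid with `m = |S|`, up to the reflection `y ↦ b - y` when `S < 0`.
-/

/-- The standard Hirzebruch trapezoid with parameters `(a, b, m)`. -/
def hirzTrap (a b : ℝ) (m : ℕ) : Set (ℝ × ℝ) :=
  convexHull ℝ
    {(0, 0), (0, b), (a - (m : ℝ) * b / 2, b), (a + (m : ℝ) * b / 2, 0)}

/-- The affine map `x ↦ Rx + v` on `ℝ²`, for `R` an integer matrix. -/
def aglMap (R : Matrix (Fin 2) (Fin 2) ℤ) (v : ℝ × ℝ) (x : ℝ × ℝ) : ℝ × ℝ :=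
  ((R 0 0 : ℝ) * x.1 + (R 0 1 : ℝ) * x.2 + v.1,
   (R 1 0 : ℝ) * x.1 + (R 1 1 : ℝ) * x.2 + v.2)

def cross {R : Type*} [CommRing R] (a b : R × R) : R := a.1 * b.2 - a.2 * b.1

theorem eq_cross_smul_sub_of_cross_eq_one {R : Type*} [CommRing R] {a b c : R × R}
    (hab : cross a b = 1) (hbc : cross b c = 1) : c = cross a c • b - a := by
  unfold cross at *
  ext
  · simp only [Prod.fst_sub, Prod.smul_fst, smul_eq_mul]
    linear_combination -c.1 * hab - a.1 * hbc
  · simp only [Prod.snd_sub, Prod.smul_snd, smul_eq_mul]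
    linear_combination -c.2 * hab - a.2 * hbc

theorem eq_neg_or_eq_neg_of_cross_eq_one {R : Type*} [CommRing R] [NoZeroDivisors R] (u : Fin 4 → R × R)
    (h : ∀ i, cross (u i) (u (i + 1)) = 1) : u 2 = -u 0 ∨ u 3 = -u 1 := by
  have h01 : cross (u 0) (u 1) = 1 := h 0
  have h2 : u 2 = cross (u 0) (u 2) • u 1 - u 0 := eq_cross_smul_sub_of_cross_eq_one h01 (h 1)
  have h1 : u 1 = cross (u 3) (u 1) • u 0 - u 3 := eq_cross_smul_sub_of_cross_eq_one (h 3) h01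
  set K := cross (u 0) (u 2)
  set S := cross (u 3) (u 1)
  have h3 : u 3 = S • u 0 - u 1 := by rw [h1]; abel
  have hKS : K * S = 0 := by
    have h23 : cross (u 2) (u 3) = 1 := h 2
    rw [h2, h3] at h23
    unfold cross at h23 h01
    simp only [Prod.fst_sub, Prod.snd_sub, Prod.smul_fst, Prod.smul_snd, smul_eq_mul] at h23
    linear_combination -h23 + (1 - K * S) * h01
  rcases mul_eq_zero.mp hKS with hK | hS
  · left; rw [h2, hK, zero_smul, zero_sub]
  · right; rw [h3, hS, zero_smul, zero_sub]

def aglAffineMap (R : Matrix (Fin 2) (Fin 2) ℤ) (v : ℝ × ℝ) : (ℝ × ℝ) →ᵃ[ℝ] (ℝ × ℝ) :=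
  (((R 0 0 : ℝ) • LinearMap.fst ℝ ℝ ℝ + (R 0 1 : ℝ) • LinearMap.snd ℝ ℝ ℝ).prod
      ((R 1 0 : ℝ) • LinearMap.fst ℝ ℝ ℝ + (R 1 1 : ℝ) • LinearMap.snd ℝ ℝ ℝ)).toAffineMap +
    AffineMap.const ℝ (ℝ × ℝ) v

theorem coe_aglAffineMap (R : Matrix (Fin 2) (Fin 2) ℤ) (v : ℝ × ℝ) :
    ⇑(aglAffineMap R v) = aglMap R v := by
  ext x <;> simp [aglAffineMap, aglMap]

theorem aglMap_image_convexHull (R : Matrix (Fin 2) (Fin 2) ℤ) (v : ℝ × ℝ) (s : Set (ℝ × ℝ)) :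
    aglMap R v '' convexHull ℝ s = convexHull ℝ (aglMap R v '' s) := by
  rw [← coe_aglAffineMap, AffineMap.image_convexHull]

theorem aglMap_one_zero : aglMap 1 0 = id := by
  ext x <;> simp [aglMap]

theorem aglMap_comp (R S : Matrix (Fin 2) (Fin 2) ℤ) (v w : ℝ × ℝ) :
    aglMap S w ∘ aglMap R v = aglMap (S * R) (aglMap S w v) := by
  ext x <;> simp [aglMap, Matrix.mul_apply, Fin.sum_univ_two] <;> ring

def IsAGLImage (P Q : Set (ℝ × ℝ)) : Prop :=
  ∃ R : Matrix (Fin 2) (Fin 2) ℤ, (R.det = 1 ∨ R.det = -1) ∧ ∃ v : ℝ × ℝ, aglMap R v '' P = Q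

theorem IsAGLImage.refl (P : Set (ℝ × ℝ)) : IsAGLImage P P :=
  ⟨1, .inl Matrix.det_one, 0, by rw [aglMap_one_zero, Set.image_id]⟩

theorem IsAGLImage.trans {P Q T : Set (ℝ × ℝ)} (hPQ : IsAGLImage P Q) (hQT : IsAGLImage Q T) :
    IsAGLImage P T := by
  obtain ⟨R, hR, v, rfl⟩ := hPQ
  obtain ⟨S, hS, w, rfl⟩ := hQT
  refine ⟨S * R, ?_, aglMap S w v, by rw [Set.image_image, ← aglMap_comp]; rfl⟩
  rw [Matrix.det_mul]
  rcases hR with hR | hR <;> rcases hS with hS | hS <;> simp [hR, hS]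

theorem exists_isAGLImage_hirzTrap_of_trapezoid {b s t : ℝ} (k : ℤ) (hs : 0 < s) (ht : 0 < t)
    (hk : s - t = k * b) :
    ∃ (m : ℕ) (a : ℝ), a > m * b / 2 ∧
      IsAGLImage (hirzTrap a b m) (convexHull ℝ {(0, 0), (0, b), (t, b), (s, 0)}) := by
  rcases le_or_gt 0 k with hk0 | hk0
  · have hm : ((k.toNat : ℕ) : ℝ) = k := by exact_mod_cast Int.toNat_of_nonneg hk0
    refine ⟨k.toNat, (s + t) / 2, by rw [hm]; linarith, ?_⟩
    have hTop : (s + t) / 2 - (k.toNat : ℝ) * b / 2 = t := by rw [hm]; linarith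
    have hBot : (s + t) / 2 + (k.toNat : ℝ) * b / 2 = s := by rw [hm]; linarith
    rw [hirzTrap, hTop, hBot]
    exact IsAGLImage.refl _
  · have hm : (((-k).toNat : ℕ) : ℝ) = -k := by exact_mod_cast Int.toNat_of_nonneg (by omega)
    refine ⟨(-k).toNat, (s + t) / 2, by rw [hm]; linarith, ?_⟩
    have hTop : (s + t) / 2 - ((-k).toNat : ℝ) * b / 2 = s := by rw [hm]; linarith
    have hBot : (s + t) / 2 + ((-k).toNat : ℝ) * b / 2 = t := by rw [hm]; linarith
    refine ⟨!![1, 0; 0, -1], .inr (by simp), (0, b), ?_⟩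
    rw [hirzTrap, hTop, hBot, aglMap_image_convexHull]
    congr 1
    have hflip : ∀ x : ℝ × ℝ, aglMap !![1, 0; 0, -1] (0, b) x = (x.1, b - x.2) := fun x => by
      simp [aglMap, sub_eq_neg_add]
    simp only [Set.image_insert_eq, Set.image_singleton, hflip, sub_zero, sub_self]
    rw [Set.insert_comm, Set.pair_comm]

def pairing (a : ℤ × ℤ) (x : ℝ × ℝ) : ℝ := a.1 * x.1 + a.2 * x.2

@[simp] theorem pairing_sub_right (a : ℤ × ℤ) (x y : ℝ × ℝ) :
    pairing a (x - y) = pairing a x - pairing a y := by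
  simp only [pairing, Prod.fst_sub, Prod.snd_sub]; ring

@[simp] theorem pairing_neg_left (a : ℤ × ℤ) (x : ℝ × ℝ) : pairing (-a) x = -pairing a x := by
  simp only [pairing, Prod.fst_neg, Prod.snd_neg, Int.cast_neg]; ring

@[simp] theorem pairing_sub_left (a b : ℤ × ℤ) (x : ℝ × ℝ) :
    pairing (a - b) x = pairing a x - pairing b x := by
  simp only [pairing, Prod.fst_sub, Prod.snd_sub, Int.cast_sub]; ring

@[simp] theorem pairing_smul_left (k : ℤ) (a : ℤ × ℤ) (x : ℝ × ℝ) :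
    pairing (k • a) x = k * pairing a x := by
  simp only [pairing, Prod.smul_fst, Prod.smul_snd, smul_eq_mul, Int.cast_mul]; ring

def cornerChart (a b : ℤ × ℤ) (v x : ℝ × ℝ) : ℝ × ℝ := (pairing a (x - v), pairing b (x - v))

theorem aglMap_cornerChart {a b : ℤ × ℤ} (h : cross a b = 1) (v x : ℝ × ℝ) :
    aglMap !![b.2, -a.2; -b.1, a.1] v (cornerChart a b v x) = x := by
  have h' : (a.1 * b.2 - a.2 * b.1 : ℝ) = 1 := by exact_mod_cast h
  ext
  · simp only [aglMap, cornerChart, pairing, Prod.fst_sub, Prod.snd_sub, Matrix.of_apply,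
      Matrix.cons_val', Matrix.cons_val_zero, Matrix.cons_val_one, Matrix.empty_val',
      Matrix.cons_val_fin_one, Int.cast_neg]
    linear_combination (x.1 - v.1) * h'
  · simp only [aglMap, cornerChart, pairing, Prod.fst_sub, Prod.snd_sub, Matrix.of_apply,
      Matrix.cons_val', Matrix.cons_val_zero, Matrix.cons_val_one, Matrix.empty_val',
      Matrix.cons_val_fin_one, Int.cast_neg]
    linear_combination (x.2 - v.2) * h'

theorem cornerChart_injective {a b : ℤ × ℤ} (h : cross a b = 1) (v : ℝ × ℝ) :
    Function.Injective (cornerChart a b v) :=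
  Function.LeftInverse.injective (aglMap_cornerChart h v)

theorem isAGLImage_convexHull_image_cornerChart {a b : ℤ × ℤ} (h : cross a b = 1)
    (v : ℝ × ℝ) (s : Set (ℝ × ℝ)) :
    IsAGLImage (convexHull ℝ (cornerChart a b v '' s)) (convexHull ℝ s) := by
  refine ⟨!![b.2, -a.2; -b.1, a.1], .inl ?_, v, ?_⟩
  · rw [Matrix.det_fin_two_of, ← h, cross]; ring
  · rw [aglMap_image_convexHull, Set.image_image]
    simp only [aglMap_cornerChart h, Set.image_id']

/-- `p` lists the vertices counterclockwise; edge `i` joins `p i` to `p (i + 1)` and has inward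
normal `u i`. -/
structure IsDelzantQuad (p : Fin 4 → ℝ × ℝ) (u : Fin 4 → ℤ × ℤ) : Prop where
  injective : Function.Injective p
  cross_eq_one : ∀ i, cross (u i) (u (i + 1)) = 1
  pairing_edge : ∀ i, pairing (u i) (p (i + 1) - p i) = 0
  pairing_nonneg : ∀ i, ∀ x ∈ convexHull ℝ (Set.range p), 0 ≤ pairing (u i) (x - p i)

theorem range_comp_add_one {α : Type*} {n : ℕ} [NeZero n] (f : Fin n → α) :
    Set.range (f ∘ (· + 1)) = Set.range f :=
  (Equiv.addRight 1).surjective.range_comp f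

namespace IsDelzantQuad

variable {p : Fin 4 → ℝ × ℝ} {u : Fin 4 → ℤ × ℤ}

theorem rotate (h : IsDelzantQuad p u) : IsDelzantQuad (p ∘ (· + 1)) (u ∘ (· + 1)) where
  injective := h.injective.comp (add_left_injective 1)
  cross_eq_one i := h.cross_eq_one (i + 1)
  pairing_edge i := h.pairing_edge (i + 1)
  pairing_nonneg i x hx := h.pairing_nonneg (i + 1) x (by rwa [range_comp_add_one] at hx)

theorem pairing_vertex_nonneg (h : IsDelzantQuad p u) (i j : Fin 4) :
    0 ≤ pairing (u i) (p j - p i) :=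
  h.pairing_nonneg i (p j) (subset_convexHull ℝ _ (Set.mem_range_self j))

theorem exists_isAGLImage_hirzTrap_of_eq_neg (h : IsDelzantQuad p u) (hpar : u 2 = -u 0) :
    ∃ (m : ℕ) (a b : ℝ), b > 0 ∧ a > m * b / 2 ∧
      IsAGLImage (hirzTrap a b m) (convexHull ℝ (Set.range p)) := by
  have h12 : cross (u 1) (u 2) = 1 := h.cross_eq_one 1
  obtain ⟨S, hu1⟩ : ∃ S : ℤ, u 1 = S • u 0 - u 3 :=
    ⟨_, eq_cross_smul_sub_of_cross_eq_one (h.cross_eq_one 3) (h.cross_eq_one 0)⟩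
  have e0 : pairing (u 0) (p 1 - p 0) = 0 := h.pairing_edge 0
  have e1 : pairing (u 1) (p 2 - p 1) = 0 := h.pairing_edge 1
  have e2 : pairing (u 2) (p 3 - p 2) = 0 := h.pairing_edge 2
  have e3 : pairing (u 3) (p 0 - p 3) = 0 := h.pairing_edge 3
  rw [hpar] at e2
  simp only [pairing_sub_right, pairing_neg_left] at e0 e1 e2 e3
  set φ := cornerChart (u 1) (u 2) (p 2)
  obtain ⟨b, hb⟩ : ∃ b, pairing (u 2) (p 1 - p 2) = b := ⟨_, rfl⟩
  obtain ⟨t, ht⟩ : ∃ t, pairing (u 1) (p 0 - p 2) = t := ⟨_, rfl⟩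
  obtain ⟨s, hs⟩ : ∃ s, pairing (u 1) (p 3 - p 2) = s := ⟨_, rfl⟩
  have hφ2 : φ (p 2) = (0, 0) := by simp [φ, cornerChart, pairing]
  have hφ1 : φ (p 1) = (0, b) := by
    refine Prod.ext ?_ hb
    simp only [φ, cornerChart, pairing_sub_right]; linarith
  have hφ0 : φ (p 0) = (t, b) := by
    refine Prod.ext ht ?_
    simp only [φ, cornerChart, ← hb, hpar, pairing_sub_right, pairing_neg_left]; linarith
  have hφ3 : φ (p 3) = (s, 0) := by
    refine Prod.ext hs ?_
    simp only [φ, cornerChart, hpar, pairing_sub_right, pairing_neg_left]; linarith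
  have hst : s - t = S * b := by
    rw [← hs, ← ht, ← hb, hpar, hu1]
    simp only [pairing_sub_right, pairing_sub_left, pairing_smul_left, pairing_neg_left]
    linear_combination e3 + S * (e0 - e2)
  have hφinj : ∀ i j, φ (p i) = φ (p j) → i = j :=
    fun i j hij => h.injective (cornerChart_injective h12 _ hij)
  have hb0 : 0 < b := by
    refine lt_of_le_of_ne (hb ▸ h.pairing_vertex_nonneg 2 1) fun hb0 => ?_
    exact absurd (hφinj 1 2 (by rw [hφ1, hφ2, ← hb0])) (by decide)
  have ht0 : 0 < t := by
    have := h.pairing_vertex_nonneg 1 0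
    refine lt_of_le_of_ne ?_ fun ht0 => ?_
    · rw [← ht]; simp only [pairing_sub_right] at this ⊢; linarith
    · exact absurd (hφinj 0 1 (by rw [hφ0, hφ1, ← ht0])) (by decide)
  have hs0 : 0 < s := by
    have := h.pairing_vertex_nonneg 1 3
    refine lt_of_le_of_ne ?_ fun hs0 => ?_
    · rw [← hs]; simp only [pairing_sub_right] at this ⊢; linarith
    · exact absurd (hφinj 3 2 (by rw [hφ3, hφ2, ← hs0])) (by decide)
  obtain ⟨m, a, ha, hT⟩ := exists_isAGLImage_hirzTrap_of_trapezoid S hs0 ht0 hst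
  refine ⟨m, a, b, hb0, ha, hT.trans ?_⟩
  have hvert : ({(0, 0), (0, b), (t, b), (s, 0)} : Set (ℝ × ℝ)) = φ '' Set.range p := by
    rw [← Set.range_comp]
    ext y
    simp only [Set.mem_insert_iff, Set.mem_singleton_iff, Set.mem_range, Function.comp_apply,
      Fin.exists_fin_succ, Fin.succ_zero_eq_one, Fin.succ_one_eq_two, Fin.reduceSucc,
      IsEmpty.exists_iff, or_false, hφ0, hφ1, hφ2, hφ3]
    tauto
  rw [hvert]
  exact isAGLImage_convexHull_image_cornerChart h12 _ _

end IsDelzantQuad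

theorem stmt_12_general (p : Fin 4 → ℝ × ℝ) (u : Fin 4 → ℤ × ℤ)
    (hinj : Function.Injective p)
    (hdet : ∀ i : Fin 4,
      (u i).1 * (u (i + 1)).2 - (u i).2 * (u (i + 1)).1 = 1)
    (hperp : ∀ i : Fin 4,
      ((u i).1 : ℝ) * ((p (i + 1)).1 - (p i).1) +
        ((u i).2 : ℝ) * ((p (i + 1)).2 - (p i).2) = 0)
    (hin : ∀ i : Fin 4, ∀ x ∈ convexHull ℝ (Set.range p),
      ((u i).1 : ℝ) * (x.1 - (p i).1) + ((u i).2 : ℝ) * (x.2 - (p i).2) ≥ 0) :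
    ∃ (m : ℕ) (a b : ℝ), b > 0 ∧ a > (m : ℝ) * b / 2 ∧
      ∃ R : Matrix (Fin 2) (Fin 2) ℤ, (R.det = 1 ∨ R.det = -1) ∧
        ∃ v : ℝ × ℝ,
          aglMap R v '' hirzTrap a b m = convexHull ℝ (Set.range p) := by
  have hP : IsDelzantQuad p u := ⟨hinj, hdet, hperp, hin⟩
  rcases eq_neg_or_eq_neg_of_cross_eq_one u hP.cross_eq_one with h02 | h13
  · exact hP.exists_isAGLImage_hirzTrap_of_eq_neg h02
  · rw [← range_comp_add_one]
    exact hP.rotate.exists_isAGLImage_hirzTrap_of_eq_neg h13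

/-- Every four-edged Delzant polygon (vertices `p i` in counterclockwise
cyclic order, distinct, with primitive integral inward edge normals `u i`
having consecutive determinants `1`) is the image of a standard Hirzebruch
trapezoid under an element of `AGL(2,ℤ)`. -/
theorem stmt_12 (p : Fin 4 → ℝ × ℝ) (u : Fin 4 → ℤ × ℤ)
    (hinj : Function.Injective p)
    (hdet : ∀ i : Fin 4,
      (u i).1 * (u (i + 1)).2 - (u i).2 * (u (i + 1)).1 = 1)
    (hprim : ∀ i : Fin 4, Int.gcd (u i).1 (u i).2 = 1)
    (hperp : ∀ i : Fin 4,
      ((u i).1 : ℝ) * ((p (i + 1)).1 - (p i).1) +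
        ((u i).2 : ℝ) * ((p (i + 1)).2 - (p i).2) = 0)
    (hin : ∀ i : Fin 4, ∀ x ∈ convexHull ℝ (Set.range p),
      ((u i).1 : ℝ) * (x.1 - (p i).1) + ((u i).2 : ℝ) * (x.2 - (p i).2) ≥ 0) :
    ∃ (m : ℕ) (a b : ℝ), b > 0 ∧ a > (m : ℝ) * b / 2 ∧
      ∃ R : Matrix (Fin 2) (Fin 2) ℤ, (R.det = 1 ∨ R.det = -1) ∧
        ∃ v : ℝ × ℝ,
          aglMap R v '' hirzTrap a b m = convexHull ℝ (Set.range p) :=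
  stmt_12_general p u hinj hdet hperp hin
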